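/- arXiv:2505.23057 — 3 statements merged into one kernel-verified Lean document; each statement's English description precedes it below -/
import Mathlib

section
/- Let $J \ge 3$, let $Q_*$ be the regular $J$-gon centered at the origin, and let $G$ be a subgroup of $D_J$. The natural action of $G$ on the set $\mathbb{Z}_J$ of boundary segments of $Q_*$ is transitive if and only if $G = D_J$, $G = Rot_J$, or ($J$ is even and $G = D_{J/2}^V$). -/
open Complex Real Set

noncomputable section

abbrev Iso2 := ℂ ≃ₗᵢ[ℝ] ℂ

/-- Rotation about the origin by angle `θ`, as a linear isometry of `ℝ² = ℂ`. -/
def rotIso (θ : ℝ) : Iso2 := rotation (Circle.exp θ)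

/-- Reflection `R_θ` in the line `{(t cos θ, t sin θ) : t ∈ ℝ}` through the origin. -/
def reflIso (θ : ℝ) : Iso2 := rotIso (2 * θ) * Complex.conjLIE

/-- The vertex `p_i` of the regular `J`-gon. -/
def vertex (J : ℕ) (i : ℤ) : ℂ :=
  (1 / Real.cos (π / J)) • Complex.exp ((π / J + 2 * π * i / J - π / 2) * Complex.I)

/-- The boundary segment `b_i` of the regular `J`-gon, joining `p_{i-1}` and `p_i`. -/
def edge (J : ℕ) (i : ℤ) : Set ℂ := segment ℝ (vertex J (i - 1)) (vertex J i)

/-- The (solid) regular `J`-gon `Q_*^{(J)}`. -/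
def polyQ (J : ℕ) : Set ℂ :=
  {z | ∃ t ∈ Icc (0 : ℝ) 1, ∃ i : ℤ, ∃ y ∈ edge J i, z = t • y}

/-- The symmetry group `D_J` of the regular `J`-gon, as a subset of `O(2)`
(the group of linear isometries of the plane). -/
def DJ (J : ℕ) : Set Iso2 := {g | g '' polyQ J = polyQ J}

/-- The rotation group `Rot_J`. -/
def RotJ (J : ℕ) : Set Iso2 := {g | ∃ i : ℤ, g = rotIso (2 * π * i / J)}

/-- `D_J^*`: the subgroup of `O(2)` generated by `D_J` and the reflections
`R_{ρ(i)}` in the lines through the origin parallel to the edges `b_i`. -/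
def DJstar (J : ℕ) : Subgroup Iso2 :=
  Subgroup.closure (DJ J ∪ {g | ∃ i : ℤ, g = reflIso (2 * π * i / J)})

/-- For even `J`, `D_{J/2}^V = Rot_{J/2} ∪ {R_{θ_i} : i}` with `θ_i = 2πi/J + π/J - π/2`. -/
def DHalfV (J : ℕ) : Set Iso2 :=
  {g | ∃ i : ℤ, g = rotIso (4 * π * i / J)} ∪
    {g | ∃ i : ℤ, g = reflIso (2 * π * i / J + π / J - π / 2)}

/-! Every symmetry of the polygon preserves the circumscribed circle, which meets the polygon
only in the vertices, and a linear isometry of the plane is fixed by its orientation and the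
image of one vertex. So `D_J` consists of the rotations `ρ_k`, sending `b_i` to `b_{i+k}`, and
the reflections `σ_m`, sending `b_i` to `b_{m-i}`. A subgroup `G` is then described by its
rotation indices `K`, a subgroup of `ℤ` containing `J`, and its reflection indices `M`, a coset
of `K` when nonempty; transitivity means `K ∪ M = ℤ`. If `1 ∈ K` then `K = ℤ` and `G` is `Rot_J`
or `D_J`. Otherwise `1 ∈ M`, so `2 ∈ K`, hence `K` is the even and `M` the odd integers, and
`J ∈ K` is even: `G = D_{J/2}^V`. -/

lemma Int.mem_iff_even_of_two_mem_of_one_notMem {K : AddSubgroup ℤ} (h2 : 2 ∈ K) (h1 : 1 ∉ K)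
    (x : ℤ) : x ∈ K ↔ Even x := by
  constructor
  · intro hx
    by_contra hodd
    obtain ⟨r, rfl⟩ := Int.not_even_iff_odd.1 hodd
    exact h1 (by simpa [mul_comm] using K.sub_mem hx (K.zsmul_mem h2 r))
  · rintro ⟨r, rfl⟩
    simpa [mul_two] using K.zsmul_mem h2 r

open ComplexConjugate

namespace RegularPolygon

lemma rotIso_apply (θ : ℝ) (z : ℂ) : rotIso θ z = exp (θ * I) * z := by
  simp [rotIso, Circle.coe_exp]

lemma reflIso_apply (θ : ℝ) (z : ℂ) : reflIso θ z = exp ((2 * θ : ℝ) * I) * conj z := by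
  simp [reflIso, rotIso_apply]

lemma rotIso_add (a b : ℝ) : rotIso (a + b) = rotIso a * rotIso b := by
  simp only [rotIso, Circle.exp_add, map_mul]

lemma rotIso_two_pi_mul_int (n : ℤ) : rotIso (2 * π * n) = 1 := by
  simp only [rotIso, Circle.exp_two_pi_mul_int, map_one]

lemma rotIso_mul_reflIso (a b : ℝ) : rotIso a * reflIso b = reflIso (b + a / 2) := by
  rw [reflIso, reflIso, ← mul_assoc, ← rotIso_add]
  ring_nf

lemma reflIso_mul_reflIso (a b : ℝ) : reflIso a * reflIso b = rotIso (2 * a - 2 * b) := by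
  ext z
  simp only [LinearIsometryEquiv.coe_mul, Function.comp_apply, rotIso_apply, reflIso_apply,
    map_mul, ← Complex.exp_conj, conj_I, conj_ofReal, conj_conj, ← mul_assoc, ← Complex.exp_add]
  push_cast
  ring_nf

lemma rotation_injective_of_apply {a b : Circle} {z : ℂ} (hz : z ≠ 0)
    (h : rotation a z = rotation b z) : a = b := by
  simp only [rotation_apply] at h
  exact Circle.ext (mul_right_cancel₀ hz h)

def polyRot (J : ℕ) (k : ℤ) : Iso2 := rotIso (2 * π * k / J)

-- the reflection `σ_m` of the header, exchanging the edges `b_i` and `b_{m-i}`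
def polyRefl (J : ℕ) (m : ℤ) : Iso2 := reflIso (π * m / J - π / 2)

variable {J : ℕ}

lemma polyRot_add (k l : ℤ) : polyRot J (k + l) = polyRot J k * polyRot J l := by
  rw [polyRot, polyRot, polyRot, ← rotIso_add]
  push_cast
  ring_nf

lemma polyRot_mul_polyRefl (k m : ℤ) : polyRot J k * polyRefl J m = polyRefl J (m + k) := by
  rw [polyRot, polyRefl, polyRefl, rotIso_mul_reflIso]
  push_cast
  ring_nf

lemma polyRefl_mul_polyRefl (m n : ℤ) : polyRefl J m * polyRefl J n = polyRot J (m - n) := by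
  rw [polyRefl, polyRefl, polyRot, reflIso_mul_reflIso]
  push_cast
  ring_nf

lemma polyRot_zero : polyRot J 0 = 1 := by
  simp [polyRot, rotIso]

lemma polyRot_mul_natCast (hJ : J ≠ 0) (n : ℤ) : polyRot J (J * n) = 1 := by
  rw [polyRot, ← rotIso_two_pi_mul_int n]
  congr 1
  push_cast
  field_simp

lemma polyRot_congr (hJ : J ≠ 0) {k l : ℤ} (h : k ≡ l [ZMOD J]) : polyRot J k = polyRot J l := by
  obtain ⟨n, hn⟩ := h.dvd
  rw [show l = k + J * n by omega, polyRot_add, polyRot_mul_natCast hJ, mul_one]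

lemma polyRefl_congr (hJ : J ≠ 0) {m n : ℤ} (h : m ≡ n [ZMOD J]) :
    polyRefl J m = polyRefl J n := by
  obtain ⟨u, hu⟩ := h.dvd
  rw [show n = m + J * u by omega, ← polyRot_mul_polyRefl, polyRot_mul_natCast hJ, one_mul]

lemma image_segment_iso (g : Iso2) (x y : ℂ) : g '' segment ℝ x y = segment ℝ (g x) (g y) :=
  image_segment ℝ g.toLinearEquiv.toLinearMap.toAffineMap x y

lemma vertex_eq_real_angle (J : ℕ) (i : ℤ) :
    vertex J i = (1 / Real.cos (π / J)) • exp (((2 * i + 1) * π / J - π / 2 : ℝ) * I) := by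
  rw [vertex]
  push_cast
  ring_nf

lemma vertex_eq_exp_mul (J : ℕ) (i : ℤ) :
    vertex J i = exp ((2 * π * i / J : ℝ) * I) * vertex J 0 := by
  rw [vertex, vertex, mul_smul_comm, ← Complex.exp_add]
  push_cast
  ring_nf

lemma polyRot_vertex (k i : ℤ) : polyRot J k (vertex J i) = vertex J (i + k) := by
  rw [polyRot, rotIso_apply, vertex_eq_exp_mul J i, vertex_eq_exp_mul J (i + k), ← mul_assoc,
    ← Complex.exp_add]
  push_cast
  ring_nf

lemma polyRefl_vertex (m i : ℤ) : polyRefl J m (vertex J i) = vertex J (m - 1 - i) := by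
  rw [polyRefl, reflIso_apply, vertex_eq_real_angle, vertex_eq_real_angle, real_smul, map_mul,
    conj_ofReal, ← Complex.exp_conj, map_mul, conj_I, conj_ofReal, mul_left_comm,
    ← Complex.exp_add, real_smul]
  push_cast
  ring_nf

lemma polyRot_image_edge (k i : ℤ) : polyRot J k '' edge J i = edge J (i + k) := by
  rw [edge, edge, image_segment_iso, polyRot_vertex, polyRot_vertex, sub_add_eq_add_sub]

lemma polyRefl_image_edge (m i : ℤ) : polyRefl J m '' edge J i = edge J (m - i) := by
  rw [edge, edge, image_segment_iso, polyRefl_vertex, polyRefl_vertex, segment_symm]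
  ring_nf

lemma cos_pi_div_pos (hJ : 3 ≤ J) : 0 < Real.cos (π / J) := by
  have hJ' : (3 : ℝ) ≤ J := by exact_mod_cast hJ
  apply Real.cos_pos_of_mem_Ioo
  constructor
  · linarith [pi_pos, div_pos pi_pos (by linarith : (0 : ℝ) < J)]
  · linarith [pi_pos, div_le_div_of_nonneg_left pi_pos.le (by norm_num) hJ']

lemma norm_vertex (hJ : 3 ≤ J) (i : ℤ) : ‖vertex J i‖ = 1 / Real.cos (π / J) := by
  rw [vertex_eq_real_angle, norm_smul, norm_exp_ofReal_mul_I, mul_one,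
    Real.norm_of_nonneg (one_div_pos.2 (cos_pi_div_pos hJ)).le]

lemma vertex_ne_zero (hJ : 3 ≤ J) (i : ℤ) : vertex J i ≠ 0 := by
  rw [← norm_pos_iff, norm_vertex hJ]
  exact one_div_pos.2 (cos_pi_div_pos hJ)

lemma modEq_of_vertex_eq (hJ : 3 ≤ J) {i j : ℤ} (h : vertex J i = vertex J j) :
    i ≡ j [ZMOD J] := by
  have hζ := Complex.isPrimitiveRoot_exp J (by omega)
  have hpow : ∀ l : ℤ, exp ((2 * π * l / J : ℝ) * I) = exp (2 * π * I / J) ^ l := fun l => by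
    rw [← Complex.exp_int_mul]
    push_cast
    ring_nf
  rw [vertex_eq_exp_mul J i, vertex_eq_exp_mul J j, hpow, hpow] at h
  have hij := mul_right_cancel₀ (vertex_ne_zero hJ 0) h
  rw [Int.modEq_iff_dvd, ← hζ.zpow_eq_one_iff_dvd, zpow_sub₀ (hζ.ne_zero (by omega)), hij,
    div_self (zpow_ne_zero _ (hζ.ne_zero (by omega)))]

lemma edge_subset_closedBall (hJ : 3 ≤ J) (i : ℤ) :
    edge J i ⊆ Metric.closedBall 0 (1 / Real.cos (π / J)) :=
  (convex_closedBall _ _).segment_subset (by simp [norm_vertex hJ]) (by simp [norm_vertex hJ])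

lemma eq_vertex_of_mem_edge (hJ : 3 ≤ J) {i : ℤ} {y : ℂ} (hy : y ∈ edge J i)
    (hn : ‖y‖ = 1 / Real.cos (π / J)) : y = vertex J (i - 1) ∨ y = vertex J i := by
  by_contra! hne
  have hdiff : vertex J (i - 1) ≠ vertex J i := fun e => by
    have := Int.le_of_dvd one_pos (by simpa using (modEq_of_vertex_eq hJ e).dvd)
    omega
  have := openSegment_subset_ball_of_ne (edge_subset_closedBall hJ i (left_mem_segment ℝ _ _))
    (edge_subset_closedBall hJ i (right_mem_segment ℝ _ _)) hdiff
    (mem_openSegment_of_ne_left_right hne.1.symm hne.2.symm hy)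
  simp [hn] at this

lemma modEq_of_edge_eq (hJ : 3 ≤ J) {a b : ℤ} (h : edge J a = edge J b) : a ≡ b [ZMOD J] := by
  have hmem : ∀ c, vertex J c ∈ edge J a → (J : ℤ) ∣ a - 1 - c ∨ (J : ℤ) ∣ a - c := fun c hc =>
    (eq_vertex_of_mem_edge hJ hc (norm_vertex hJ c)).imp
      (fun e => (modEq_of_vertex_eq hJ e).dvd) (fun e => (modEq_of_vertex_eq hJ e).dvd)
  rcases hmem b (h ▸ right_mem_segment ℝ _ _) with h1 | h1
  · rcases hmem (b - 1) (h ▸ left_mem_segment ℝ _ _) with h2 | h2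
    · exact (Int.modEq_iff_dvd.2 (by rwa [sub_sub_sub_cancel_right] at h2)).symm
    · have h3 := dvd_sub h2 h1
      rw [show a - (b - 1) - (a - 1 - b) = 2 by ring] at h3
      have := Int.le_of_dvd two_pos h3
      omega
  · exact (Int.modEq_iff_dvd.2 h1).symm

lemma vertex_mem_polyQ (J : ℕ) (i : ℤ) : vertex J i ∈ polyQ J :=
  ⟨1, ⟨zero_le_one, le_rfl⟩, i, vertex J i, right_mem_segment ℝ _ _, (one_smul ℝ _).symm⟩

lemma exists_eq_vertex_of_mem_polyQ (hJ : 3 ≤ J) {z : ℂ} (hz : z ∈ polyQ J)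
    (hn : ‖z‖ = 1 / Real.cos (π / J)) : ∃ k : ℤ, z = vertex J k := by
  obtain ⟨t, ⟨ht0, ht1⟩, i, y, hy, rfl⟩ := hz
  have hy_le : ‖y‖ ≤ 1 / Real.cos (π / J) := by
    simpa using edge_subset_closedBall hJ i hy
  have hr := one_div_pos.2 (cos_pi_div_pos hJ)
  rw [norm_smul, Real.norm_of_nonneg ht0] at hn
  obtain rfl : t = 1 := by nlinarith
  rw [one_mul] at hn
  rw [one_smul]
  rcases eq_vertex_of_mem_edge hJ hy hn with h | h
  exacts [⟨i - 1, h⟩, ⟨i, h⟩]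

lemma image_polyQ_eq {g : Iso2} {σ : ℤ → ℤ} (hσ : ∀ i, g '' edge J i = edge J (σ i))
    (hsurj : Function.Surjective σ) : g '' polyQ J = polyQ J := by
  ext z
  constructor
  · rintro ⟨w, ⟨t, ht, i, y, hy, rfl⟩, rfl⟩
    exact ⟨t, ht, σ i, g y, hσ i ▸ mem_image_of_mem g hy, map_smul g t y⟩
  · rintro ⟨t, ht, j, y', hy', rfl⟩
    obtain ⟨i, rfl⟩ := hsurj j
    obtain ⟨y, hy, rfl⟩ := (hσ i).symm ▸ hy'
    exact ⟨t • y, ⟨t, ht, i, y, hy, rfl⟩, map_smul g t y⟩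

lemma polyRot_mem_DJ (k : ℤ) : polyRot J k ∈ DJ J :=
  image_polyQ_eq (polyRot_image_edge k) fun j => ⟨j - k, sub_add_cancel j k⟩

lemma polyRefl_mem_DJ (m : ℤ) : polyRefl J m ∈ DJ J :=
  image_polyQ_eq (polyRefl_image_edge m) fun j => ⟨m - j, sub_sub_cancel m j⟩

lemma mem_DJ_iff (hJ : 3 ≤ J) {g : Iso2} :
    g ∈ DJ J ↔ (∃ k, g = polyRot J k) ∨ ∃ m, g = polyRefl J m := by
  refine ⟨fun hg => ?_, ?_⟩
  · obtain ⟨k, hk⟩ := exists_eq_vertex_of_mem_polyQ hJ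
      (hg ▸ mem_image_of_mem g (vertex_mem_polyQ J 0)) (by rw [g.norm_map, norm_vertex hJ])
    obtain ⟨a, rfl | rfl⟩ := linear_isometry_complex g
    · refine Or.inl ⟨k, ?_⟩
      have hrot : rotation a (vertex J 0) = polyRot J k (vertex J 0) := by
        rw [hk, polyRot_vertex, zero_add]
      rw [polyRot, rotIso, rotation_injective_of_apply (vertex_ne_zero hJ 0) hrot]
    · refine Or.inr ⟨k + 1, ?_⟩
      have hv : polyRefl J (k + 1) (vertex J 0) = vertex J k := by
        rw [polyRefl_vertex]
        ring_nf
      have hrefl : rotation a (conj (vertex J 0)) =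
          rotation (Circle.exp (2 * (π * ↑(k + 1) / J - π / 2))) (conj (vertex J 0)) :=
        hk.trans hv.symm
      rw [polyRefl, reflIso, rotIso,
        ← rotation_injective_of_apply (by simpa using vertex_ne_zero hJ 0) hrefl]
      rfl
  · rintro (⟨k, rfl⟩ | ⟨m, rfl⟩)
    exacts [polyRot_mem_DJ k, polyRefl_mem_DJ m]

def symmSet (J : ℕ) (K M : Set ℤ) : Set Iso2 := polyRot J '' K ∪ polyRefl J '' M

lemma DJ_eq_symmSet (hJ : 3 ≤ J) : DJ J = symmSet J univ univ := by
  ext g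
  simp [mem_DJ_iff hJ, symmSet, eq_comm]

lemma RotJ_eq_symmSet : RotJ J = symmSet J univ ∅ := by
  ext g
  simp [RotJ, symmSet, polyRot, eq_comm]

lemma DHalfV_eq_symmSet : DHalfV J = symmSet J {k | Even k} {m | Odd m} := by
  refine congrArg₂ (· ∪ ·) (Set.ext fun g => ⟨?_, ?_⟩) (Set.ext fun g => ⟨?_, ?_⟩)
  · rintro ⟨i, rfl⟩
    exact ⟨i + i, ⟨i, rfl⟩, by rw [polyRot]; push_cast; ring_nf⟩
  · rintro ⟨_, ⟨i, rfl⟩, rfl⟩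
    exact ⟨i, by rw [polyRot]; push_cast; ring_nf⟩
  · rintro ⟨i, rfl⟩
    exact ⟨2 * i + 1, odd_two_mul_add_one i, by rw [polyRefl]; push_cast; ring_nf⟩
  · rintro ⟨_, ⟨i, rfl⟩, rfl⟩
    exact ⟨i, by rw [polyRefl]; push_cast; ring_nf⟩

variable {G : Subgroup Iso2}

def rotIdx (J : ℕ) (G : Subgroup Iso2) : AddSubgroup ℤ where
  carrier := {k | polyRot J k ∈ G}
  zero_mem' := show polyRot J 0 ∈ G by rw [polyRot_zero]; exact G.one_mem
  add_mem' {k l} hk hl := show polyRot J (k + l) ∈ G by rw [polyRot_add]; exact G.mul_mem hk hl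
  neg_mem' {k} hk := by
    have : polyRot J (-k) = (polyRot J k)⁻¹ :=
      eq_inv_of_mul_eq_one_left (by rw [← polyRot_add, neg_add_cancel, polyRot_zero])
    show polyRot J (-k) ∈ G
    rw [this]
    exact G.inv_mem hk

def reflIdx (J : ℕ) (G : Subgroup Iso2) : Set ℤ := {m | polyRefl J m ∈ G}

@[simp] lemma mem_rotIdx {k : ℤ} : k ∈ rotIdx J G ↔ polyRot J k ∈ G := Iff.rfl

@[simp] lemma mem_reflIdx {m : ℤ} : m ∈ reflIdx J G ↔ polyRefl J m ∈ G := Iff.rfl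

lemma coe_eq_symmSet (hJ : 3 ≤ J) (hsub : (G : Set Iso2) ⊆ DJ J) :
    (G : Set Iso2) = symmSet J (rotIdx J G) (reflIdx J G) := by
  ext g
  constructor
  · intro hg
    rcases (mem_DJ_iff hJ).1 (hsub hg) with ⟨k, rfl⟩ | ⟨m, rfl⟩
    exacts [Or.inl ⟨k, hg, rfl⟩, Or.inr ⟨m, hg, rfl⟩]
  · rintro (⟨k, hk, rfl⟩ | ⟨m, hm, rfl⟩)
    exacts [hk, hm]

lemma natCast_mem_rotIdx (hJ : J ≠ 0) : (J : ℤ) ∈ rotIdx J G := by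
  rw [mem_rotIdx, ← mul_one (J : ℤ), polyRot_mul_natCast hJ]
  exact G.one_mem

lemma sub_mem_rotIdx {m n : ℤ} (hm : m ∈ reflIdx J G) (hn : n ∈ reflIdx J G) :
    m - n ∈ rotIdx J G := by
  simpa [← polyRefl_mul_polyRefl] using G.mul_mem hm hn

lemma add_mem_reflIdx {m k : ℤ} (hm : m ∈ reflIdx J G) (hk : k ∈ rotIdx J G) :
    m + k ∈ reflIdx J G := by
  simpa [← polyRot_mul_polyRefl] using G.mul_mem hk hm

lemma rotIdx_eq_univ_of_one_mem (h1 : (1 : ℤ) ∈ rotIdx J G) : (rotIdx J G : Set ℤ) = univ :=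
  eq_univ_of_forall fun k => by simpa using (rotIdx J G).zsmul_mem h1 k

lemma reflIdx_eq_univ_of_mem (hK : (rotIdx J G : Set ℤ) = univ) {m : ℤ}
    (hm : m ∈ reflIdx J G) : reflIdx J G = univ :=
  eq_univ_of_forall fun n => by
    have hnm : n - m ∈ rotIdx J G := by rw [← SetLike.mem_coe, hK]; trivial
    simpa using add_mem_reflIdx hm hnm

lemma mem_rotIdx_or_mem_reflIdx (hJ : 3 ≤ J) (hsub : (G : Set Iso2) ⊆ DJ J)
    (htrans : ∀ j : ℤ, ∃ g ∈ G, g '' edge J 0 = edge J j) (j : ℤ) :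
    j ∈ rotIdx J G ∨ j ∈ reflIdx J G := by
  obtain ⟨g, hg, hge⟩ := htrans j
  rcases (mem_DJ_iff hJ).1 (hsub hg) with ⟨k, rfl⟩ | ⟨m, rfl⟩
  · rw [polyRot_image_edge, zero_add] at hge
    exact Or.inl (mem_rotIdx.2 (polyRot_congr (by omega) (modEq_of_edge_eq hJ hge) ▸ hg))
  · rw [polyRefl_image_edge, sub_zero] at hge
    exact Or.inr (mem_reflIdx.2 (polyRefl_congr (by omega) (modEq_of_edge_eq hJ hge) ▸ hg))

lemma rotIdx_eq_even_and_reflIdx_eq_odd (h1 : 1 ∉ rotIdx J G)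
    (hcover : ∀ j : ℤ, j ∈ rotIdx J G ∨ j ∈ reflIdx J G) :
    (rotIdx J G : Set ℤ) = {k | Even k} ∧ reflIdx J G = {m | Odd m} := by
  have hM1 : (1 : ℤ) ∈ reflIdx J G := (hcover 1).resolve_left h1
  have h2 : (2 : ℤ) ∈ rotIdx J G :=
    (hcover 2).resolve_right fun hM2 => h1 (by simpa using sub_mem_rotIdx hM2 hM1)
  have hK := Int.mem_iff_even_of_two_mem_of_one_notMem h2 h1
  refine ⟨Set.ext hK, Set.ext fun m => ⟨fun hm => ?_, fun hm => ?_⟩⟩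
  · simpa [Int.even_sub_one] using (hK _).1 (sub_mem_rotIdx hm hM1)
  · have hm1 : m - 1 ∈ rotIdx J G := (hK _).2 (by simpa [Int.even_sub_one] using hm)
    simpa using add_mem_reflIdx hM1 hm1

lemma edge_transitive_of_coe_eq_symmSet {K M : Set ℤ} (hG : (G : Set Iso2) = symmSet J K M)
    (hKM : ∀ i j : ℤ, j - i ∈ K ∨ i + j ∈ M) (i j : ℤ) : ∃ g ∈ G, g '' edge J i = edge J j := by
  rcases hKM i j with h | h
  · refine ⟨polyRot J (j - i), ?_, by rw [polyRot_image_edge, add_sub_cancel]⟩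
    rw [← SetLike.mem_coe, hG]
    exact Or.inl ⟨_, h, rfl⟩
  · refine ⟨polyRefl J (i + j), ?_, by rw [polyRefl_image_edge, add_sub_cancel_left]⟩
    rw [← SetLike.mem_coe, hG]
    exact Or.inr ⟨_, h, rfl⟩

end RegularPolygon

open RegularPolygon

/-- Proposition 6.3: a subgroup `G ≤ D_J` acts transitively on the edges
`ℤ_J` of `Q_*` if and only if `G = D_J`, `G = Rot_J`, or `J` is even and `G = D_{J/2}^V`. -/
theorem statement2 (J : ℕ) (hJ : 3 ≤ J) (G : Subgroup Iso2)
    (hsub : (G : Set Iso2) ⊆ DJ J) :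
    (∀ i j : ℤ, ∃ g ∈ G, g '' edge J i = edge J j) ↔
      ((G : Set Iso2) = DJ J ∨ (G : Set Iso2) = RotJ J ∨
        (Even J ∧ (G : Set Iso2) = DHalfV J)) := by
  rw [DJ_eq_symmSet hJ, RotJ_eq_symmSet, DHalfV_eq_symmSet]
  constructor
  · intro htrans
    have hcover := mem_rotIdx_or_mem_reflIdx hJ hsub fun j => htrans 0 j
    rw [coe_eq_symmSet hJ hsub]
    by_cases h1 : (1 : ℤ) ∈ rotIdx J G
    · have hK := rotIdx_eq_univ_of_one_mem h1
      rcases (reflIdx J G).eq_empty_or_nonempty with hM | ⟨m, hm⟩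
      · exact Or.inr (Or.inl (by rw [hK, hM]))
      · exact Or.inl (by rw [hK, reflIdx_eq_univ_of_mem hK hm])
    · obtain ⟨hK, hM⟩ := rotIdx_eq_even_and_reflIdx_eq_odd h1 hcover
      have hJmem : (J : ℤ) ∈ (rotIdx J G : Set ℤ) := natCast_mem_rotIdx (by omega)
      rw [hK] at hJmem
      exact Or.inr (Or.inr ⟨Int.even_coe_nat J |>.1 hJmem, by rw [hK, hM]⟩)
  · rintro (hG | hG | ⟨-, hG⟩) <;> refine edge_transitive_of_coe_eq_symmSet hG fun i j => ?_
    · exact Or.inl (mem_univ _)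
    · exact Or.inl (mem_univ _)
    · refine (Int.even_or_odd (j - i)).imp id fun h => ?_
      rw [show i + j = j - i + 2 * i by ring]
      exact h.add_even (even_two_mul i)
end
end

section
/- Let $Q_*$ be the regular $J$-gon centered at the origin, and for $j = 1, 2$ let $f_j(x) = r\varphi_j(x) + c_j$ where $r > 0$, $\varphi_j \in O(2)$, $c_j \in \mathbb{R}^2$. Suppose there exists an edge $b_i$ of $Q_*$ such that $f_1$ and $f_2$ agree on $b_i$ and $f_1(Q_*) \cap f_2(Q_*) = f_1(b_i) = f_2(b_i)$. Then $(\varphi_2)^{-1} \circ \varphi_1 = R_{\rho(i)}$, the reflection in the line through the origin parallel to $b_i$. -/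
open Complex Real Set

noncomputable section

private theorem exp_mul_I_sub' (x y : ℂ) : Complex.exp (x*I) - Complex.exp (y*I) =
    Complex.exp (((x+y)/2) * I) * (2 * Complex.sin ((x - y)/2)) * I := by
  rw [Complex.sin]
  rw [show -((x - y) / 2) * I = y*I - ((x+y)/2*I) by ring,
      show (x - y) / 2 * I = x*I - ((x+y)/2*I) by ring,
      Complex.exp_sub, Complex.exp_sub]
  have h := Complex.exp_ne_zero ((x+y)/2*I)
  field_simp
  ring_nf
  simp [Complex.I_sq]
  ring

private lemma exp_neg_pi_div_two' : Complex.exp (((-(π/2) : ℝ) : ℂ) * I) = -I := by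
  rw [Complex.exp_mul_I, ← Complex.ofReal_cos, ← Complex.ofReal_sin]
  simp

private lemma vertex_sub' (J : ℕ) (i : ℤ) :
    vertex J i - vertex J (i-1) =
      ((2 * Real.sin (π/J) / Real.cos (π/J) : ℝ) : ℂ) *
        Complex.exp (((2*π*i/J : ℝ) : ℂ) * I) := by
  unfold vertex
  rw [Complex.real_smul, Complex.real_smul, ← mul_sub, exp_mul_I_sub']
  rw [show ((↑π / ↑J + 2 * ↑π * (i:ℂ) / ↑J - ↑π / 2 + (↑π / ↑J + 2 * ↑π * ((i-1:ℤ):ℂ) / ↑J - ↑π / 2)) / 2) * I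
      = ((2*π*i/J : ℝ) : ℂ) * I + ((-(π/2) : ℝ) : ℂ) * I by push_cast; ring,
    Complex.exp_add, exp_neg_pi_div_two']
  rw [show ((↑π / ↑J + 2 * ↑π * (i:ℂ) / ↑J - ↑π / 2 - (↑π / ↑J + 2 * ↑π * ((i-1:ℤ):ℂ) / ↑J - ↑π / 2)) / 2)
      = ((π/J : ℝ) : ℂ) by push_cast; ring, ← Complex.ofReal_sin]
  push_cast
  ring_nf
  simp [Complex.I_sq]

private lemma vertex_mul_exp_im' (J : ℕ) (k : ℤ) (θ : ℝ) :
    (vertex J k * Complex.exp (((θ : ℝ) : ℂ) * I)).im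
      = Real.sin (π/J + 2*π*k/J - π/2 + θ) / Real.cos (π/J) := by
  unfold vertex
  rw [smul_mul_assoc, ← Complex.exp_add,
    show (↑π / ↑J + 2 * ↑π * (k:ℂ) / ↑J - ↑π / 2) * I + ((θ:ℝ):ℂ) * I
      = ((π/J + 2*π*k/J - π/2 + θ : ℝ) : ℂ) * I by push_cast; ring,
    Complex.smul_im, Complex.exp_ofReal_mul_I_im, smul_eq_mul]
  ring

private lemma zero_not_mem_edge' (J : ℕ) (hJ : 3 ≤ J) (i : ℤ) : (0:ℂ) ∉ edge J i := by
  have hJ0 : (0:ℝ) < J := by positivity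
  have hα1 : 0 < π / J := by positivity
  have hα2 : π / J < π / 2 := by
    apply div_lt_div_of_pos_left pi_pos (by norm_num)
    exact_mod_cast by omega
  have hcos : 0 < Real.cos (π / J) := Real.cos_pos_of_mem_Ioo ⟨by linarith, hα2⟩
  rintro ⟨u, v, hu, hv, huv, heq⟩
  set θ : ℝ := -(2*π*i/J) with hθ
  have h1 : (vertex J i * Complex.exp ((θ:ℂ) * I)).im = -1 := by
    rw [vertex_mul_exp_im' J i θ,
      show π/J + 2*π*i/J - π/2 + θ = π/J - π/2 by rw [hθ]; ring,
      Real.sin_sub_pi_div_two]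
    field_simp
  have h2 : (vertex J (i-1) * Complex.exp ((θ:ℂ) * I)).im = -1 := by
    rw [vertex_mul_exp_im' J (i-1) θ,
      show π/J + 2*π*(i-1:ℤ)/J - π/2 + θ = -(π/J + π/2) by rw [hθ]; push_cast; ring,
      Real.sin_neg, Real.sin_add_pi_div_two]
    field_simp
  have := congrArg (fun z => (z * Complex.exp ((θ:ℂ) * I)).im) heq
  simp only [add_mul, smul_mul_assoc, Complex.add_im, Complex.smul_im, h1, h2,
    zero_mul, Complex.zero_im] at this
  simp only [smul_eq_mul] at this
  linarith

/-- Lemma 10.4: if two similitudes `f_j(x) = r φ_j(x) + c_j` with the same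
ratio agree on an edge `b_i` of `Q_*` and their images of `Q_*` meet exactly in the image of
that edge, then `φ₂⁻¹ ∘ φ₁` is the reflection `R_{ρ(i)}`. -/
theorem statement3 (J : ℕ) (hJ : 3 ≤ J) (r : ℝ) (hr : 0 < r)
    (φ₁ φ₂ : Iso2) (c₁ c₂ : ℂ) (i : ℤ) (f₁ f₂ : ℂ → ℂ)
    (hf₁ : ∀ x, f₁ x = r • φ₁ x + c₁) (hf₂ : ∀ x, f₂ x = r • φ₂ x + c₂)
    (hagree : ∀ x ∈ edge J i, f₁ x = f₂ x)
    (hinter : f₁ '' polyQ J ∩ f₂ '' polyQ J = f₁ '' edge J i)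
    (hinter' : f₁ '' edge J i = f₂ '' edge J i) :
    φ₂⁻¹ * φ₁ = reflIso (2 * π * i / J) := by
  have hJ0 : (0:ℝ) < J := by positivity
  have hα1 : 0 < π / J := by positivity
  have hα2 : π / J < π / 2 := by
    apply div_lt_div_of_pos_left pi_pos (by norm_num)
    exact_mod_cast by omega
  have hcos : 0 < Real.cos (π / J) := Real.cos_pos_of_mem_Ioo ⟨by linarith, hα2⟩
  have hsin : 0 < Real.sin (π / J) :=
    Real.sin_pos_of_pos_of_lt_pi hα1 (by linarith [pi_pos])
  set d : ℂ := vertex J i - vertex J (i-1) with hdset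
  set s : ℝ := 2 * Real.sin (π/J) / Real.cos (π/J) with hsdef
  have hd : d = (s : ℂ) * Complex.exp (((2*π*i/J : ℝ) : ℂ) * I) := vertex_sub' J i
  have hs : s ≠ 0 := by positivity
  have hdne : d ≠ 0 := by
    rw [hd]
    exact mul_ne_zero (by exact_mod_cast hs) (Complex.exp_ne_zero _)
  have hL : vertex J (i-1) ∈ edge J i := left_mem_segment ℝ _ _
  have hR : vertex J i ∈ edge J i := right_mem_segment ℝ _ _
  have e1 := hagree _ hL
  have e2 := hagree _ hR
  rw [hf₁, hf₂] at e1 e2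
  have hφd : φ₁ d = φ₂ d := by
    have h3 : r • (φ₁ (vertex J i) - φ₁ (vertex J (i-1)))
        = r • (φ₂ (vertex J i) - φ₂ (vertex J (i-1))) := by
      rw [smul_sub, smul_sub]
      have := congrArg₂ (fun a b => a - b) e2 e1
      simpa using this
    have h4 := smul_right_injective ℂ (ne_of_gt hr) h3
    rw [hdset, map_sub, map_sub]
    exact h4
  have hψd : (φ₂⁻¹ * φ₁) d = d := by
    show φ₂.symm (φ₁ d) = d
    rw [hφd]; exact φ₂.symm_apply_apply _
  obtain ⟨a, ha | ha⟩ := linear_isometry_complex (φ₂⁻¹ * φ₁)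
  · -- rotation case : impossible
    exfalso
    rw [ha, rotation_apply] at hψd
    have ha1 : (a:ℂ) = 1 := by
      have : (a:ℂ) * d = 1 * d := by rw [hψd, one_mul]
      exact mul_right_cancel₀ hdne this
    have hφeq : φ₂ = φ₁ := by
      have h1 : φ₂⁻¹ * φ₁ = 1 := by
        rw [ha]
        ext z
        simp [rotation_apply, ha1]
      exact inv_mul_eq_one.mp h1
    have hc : c₁ = c₂ := by
      rw [hφeq] at e2
      exact add_left_cancel e2
    have hf : f₁ = f₂ := funext fun x => by rw [hf₁, hf₂, hφeq, hc]
    rw [← hf, inter_self] at hinter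
    have hinj : Function.Injective f₁ := by
      intro x y hxy
      rw [hf₁, hf₁] at hxy
      exact φ₁.injective (smul_right_injective ℂ (ne_of_gt hr) (add_right_cancel hxy))
    have hpoly : polyQ J = edge J i := Set.image_injective.mpr hinj hinter
    have h0 : (0:ℂ) ∈ polyQ J :=
      ⟨0, ⟨le_refl 0, zero_le_one⟩, i, vertex J i, hR, by simp⟩
    exact zero_not_mem_edge' J hJ i (hpoly ▸ h0)
  · -- reflection case
    rw [ha] at hψd
    have hψd' : (a:ℂ) * (starRingEnd ℂ) d = d := by
      simpa [rotation_apply] using hψd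
    have hconjd : (starRingEnd ℂ) d = (s:ℂ) * Complex.exp (((-(2*π*i/J) : ℝ):ℂ) * I) := by
      rw [hd, map_mul, Complex.conj_ofReal, ← Complex.exp_conj]
      congr 2
      rw [map_mul, Complex.conj_I, Complex.conj_ofReal]
      push_cast
      ring
    have haval : (a:ℂ) = Complex.exp (((2*(2*π*i/J) : ℝ):ℂ) * I) := by
      have hsne : (s:ℂ) ≠ 0 := by exact_mod_cast hs
      rw [hconjd, hd] at hψd'
      have h6 : (a:ℂ) = ((s:ℂ) * Complex.exp (((2*π*i/J : ℝ):ℂ) * I))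
          / ((s:ℂ) * Complex.exp (((-(2*π*i/J) : ℝ):ℂ) * I)) := by
        rw [eq_div_iff (mul_ne_zero hsne (Complex.exp_ne_zero _))]
        exact hψd'
      rw [h6, mul_div_mul_left _ _ hsne, ← Complex.exp_sub]
      congr 1
      push_cast
      ring
    have haeq : a = Circle.exp (2*(2*π*i/J)) := by
      apply Subtype.ext
      rw [haval, Circle.coe_exp]
    rw [ha, haeq]
    show rotIso (2*(2*π*i/J)) * Complex.conjLIE = reflIso (2*π*i/J)
    rfl
end
end

section
/- Let $(S, \{f_s\}, \{I\})$ be a $(J,\{I\})$-self-similar system with attractor $K$ and no isolated contact point of cells. Then there exists a continuous folding map $\psi : K \to K$ such that $\psi|_{K_s} = (f_s|_K)^{-1}$ for every $s \in S$; i.e., the local inverses $(f_s)^{-1}$ on the cells $K_s$ are consistent on overlaps and glue to a well-defined continuous map. -/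
open Complex Real Set

noncomputable section

/-- The data of a `(J,G)`-self-similar system. -/
structure SSSystem (J : ℕ) (S : Type) [Fintype S] where
  r : ℝ
  hr0 : 0 < r
  hr1 : r < 1
  φ : S → Iso2
  c : S → ℂ
  G : Subgroup Iso2
  hG : (G : Set Iso2) ⊆ DJ J
  hφ : ∀ s, φ s ∈ DJstar J

namespace SSSystem

variable {J : ℕ} {S : Type} [Fintype S]

/-- The contraction `f_s(x) = r φ_s(x) + c_s`. -/
def f (σ : SSSystem J S) (s : S) (x : ℂ) : ℂ := σ.r • σ.φ s x + σ.c s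

/-- `f_w = f_{w₁} ∘ ⋯ ∘ f_{w_m}` for a word `w = w₁ ⋯ w_m`. -/
def fw (σ : SSSystem J S) (w : List S) : ℂ → ℂ := w.foldr (fun s g => σ.f s ∘ g) id

/-- The polygon `Q_w = f_w(Q_*)`. -/
def Qw (σ : SSSystem J S) (w : List S) : Set ℂ := σ.fw w '' polyQ J

/-- The cell `K_w = f_w(K)`. -/
def Kw (σ : SSSystem J S) (K : Set ℂ) (w : List S) : Set ℂ := σ.fw w '' K

/-- Edge-adjacency of two letters: the two level-1 cells share a full boundary segment. -/
def E1ℓ (σ : SSSystem J S) (s t : S) : Prop :=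
  s ≠ t ∧ ∃ i j : ℤ, σ.Qw [s] ∩ σ.Qw [t] = σ.f s '' edge J i ∧
    σ.f s '' edge J i = σ.f t '' edge J j

/-- The axioms (A1)–(A5) of a `(J,G)`-self-similar system. -/
structure Axioms (σ : SSSystem J S) : Prop where
  mapsIn : ∀ s, σ.f s '' polyQ J ⊆ polyQ J
  a2 : ∀ i : ℤ, ∃ s : S, ∃ j : ℤ, σ.f s '' edge J j ⊆ edge J i
  a3 : ∀ g ∈ σ.G, ∃ gs : S → S, ∀ s : S, ∃ h ∈ σ.G, ∀ x, g (σ.f s x) = σ.f (gs s) (h x)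
  a4 : ∀ s t : S, s ≠ t → (σ.Qw [s] ∩ σ.Qw [t]).Nonempty →
    (∃ i j : ℤ, σ.Qw [s] ∩ σ.Qw [t] = σ.f s '' edge J i ∧
        σ.f s '' edge J i = σ.f t '' edge J j ∧
        (σ.φ t)⁻¹ * σ.φ s * reflIso (2 * π * i / J) ∈ σ.G) ∨
    (∃ i j : ℤ, σ.Qw [s] ∩ σ.Qw [t] = {σ.f s (vertex J i)} ∧
        σ.f s (vertex J i) = σ.f t (vertex J j))
  a5 : ∀ s t : S, ∃ p : List S, p.Chain' σ.E1ℓ ∧ p.head? = some s ∧ p.getLast? = some t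

/-- `K` is the self-similar set (attractor) associated with the system. -/
def IsAttractor (σ : SSSystem J S) (K : Set ℂ) : Prop :=
  K.Nonempty ∧ IsCompact K ∧ K ⊆ polyQ J ∧ K = ⋃ s : S, σ.f s '' K

/-- `Q_n(x)`: the union of the level-`n` polygons whose cells contain `x`. -/
def Qn (σ : SSSystem J S) (K : Set ℂ) (n : ℕ) (x : ℂ) : Set ℂ :=
  ⋃ w ∈ {w : List S | w.length = n ∧ x ∈ σ.Kw K w}, σ.Qw w

/-- There is no isolated contact point of cells. -/
def NoIsolatedContactPoint (σ : SSSystem J S) (K : Set ℂ) : Prop :=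
  ∀ x ∈ K, ∀ n : ℕ, IsConnected (σ.Qn K n x \ {x})

end SSSystem

/-! If two level-1 polygons `Q_s`, `Q_t` share a full edge `f_s(b_i)`, then `f_t⁻¹ ∘ f_s` is an
affine map whose linear part is the reflection `R_i` (the group `G` being trivial) and which
carries `b_i` onto an edge `b_j`. Such a map either fixes `b_i` pointwise or is linear; in the
latter case `f_s 0 = f_t 0` would be a common point of `Q_s` and `Q_t` off the shared edge. Hence
`f_s⁻¹` and `f_t⁻¹` agree wherever `Q_s` and `Q_t` share more than one point.

Given a point `y` of two cells `K_s`, `K_t`, the polygons `Q_u` with `y ∈ K_u` cover the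
connected set `Q_1(y) \ {y}`, so they are linked by a chain of polygons meeting away from `y`,
along which the inverses agree at `y`. The glued map is continuous by pasting over the finite
closed cover `K = ⋃ K_s`. -/

theorem endpoints_eq_of_segment_eq {𝕜 E : Type*} [Field 𝕜] [LinearOrder 𝕜]
    [IsStrictOrderedRing 𝕜] [AddCommGroup E] [Module 𝕜 E] {a b c d : E} (hab : a ≠ b)
    (h : segment 𝕜 a b = segment 𝕜 c d) : (c = a ∧ d = b) ∨ (c = b ∧ d = a) := by
  have hc : c ∈ AffineMap.lineMap a b '' Icc (0 : 𝕜) 1 := by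
    rw [← segment_eq_image_lineMap, h]; exact left_mem_segment 𝕜 c d
  have hd : d ∈ AffineMap.lineMap a b '' Icc (0 : 𝕜) 1 := by
    rw [← segment_eq_image_lineMap, h]; exact right_mem_segment 𝕜 c d
  obtain ⟨s, -, rfl⟩ := hc
  obtain ⟨t, -, rfl⟩ := hd
  have hst : Icc (0 : 𝕜) 1 = Icc (min s t) (max s t) := by
    apply (AffineMap.lineMap_injective 𝕜 hab).image_injective
    rw [← segment_eq_image_lineMap, h, ← image_segment, segment_eq_uIcc, uIcc]
  obtain ⟨hmin, hmax⟩ := (Icc_eq_Icc_iff zero_le_one).1 hst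
  rcases le_total s t with hle | hle
  · rw [min_eq_left hle] at hmin
    rw [max_eq_right hle] at hmax
    left; simp [← hmin, ← hmax]
  · rw [min_eq_right hle] at hmin
    rw [max_eq_left hle] at hmax
    right; simp [← hmin, ← hmax]

theorem IsPreconnected.eq_of_isClosed_cover {X ι β : Type*} [TopologicalSpace X] [Finite ι]
    {T : Set X} (hT : IsPreconnected T) {F : ι → Set X} (hF : ∀ i, IsClosed (F i))
    (hTF : T ⊆ ⋃ i, F i) {g : ι → β} (hg : ∀ i j, (T ∩ F i ∩ F j).Nonempty → g i = g j)
    {i j : ι} (hi : (T ∩ F i).Nonempty) (hj : (T ∩ F j).Nonempty) : g i = g j := by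
  by_contra hne
  have hclosed : ∀ p : ι → Prop, IsClosed (⋃ k ∈ {k | p k}, F k) := fun p =>
    (Set.toFinite _).isClosed_biUnion fun k _ => hF k
  obtain ⟨z, hzT, hzA, hzB⟩ := isPreconnected_closed_iff.1 hT _ _ (hclosed (g · = g i))
    (hclosed (g · ≠ g i))
    (fun z hz => by
      obtain ⟨k, hk⟩ := mem_iUnion.1 (hTF hz)
      by_cases hki : g k = g i
      · exact Or.inl (mem_biUnion hki hk)
      · exact Or.inr (mem_biUnion hki hk))
    (hi.mono fun _ hz => ⟨hz.1, mem_biUnion rfl hz.2⟩)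
    (hj.mono fun _ hz => ⟨hz.1, mem_biUnion (Ne.symm hne) hz.2⟩)
  obtain ⟨k, hk, hzk⟩ := mem_iUnion₂.1 hzA
  obtain ⟨l, hl, hzl⟩ := mem_iUnion₂.1 hzB
  exact hl ((hg k l ⟨z, ⟨hzT, hzk⟩, hzl⟩).symm.trans hk)

theorem exists_eqOn_of_eqOn_inter {α β ι : Type*} [Nonempty β] {C : ι → Set α} {g : ι → α → β}
    (hg : ∀ i j, EqOn (g i) (g j) (C i ∩ C j)) : ∃ ψ : α → β, ∀ i, EqOn ψ (g i) (C i) := by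
  classical
  refine ⟨fun x => if h : ∃ i, x ∈ C i then g h.choose x else Classical.arbitrary β,
    fun i x hx => ?_⟩
  have h : ∃ i, x ∈ C i := ⟨i, hx⟩
  simp only [dif_pos h]
  exact hg _ _ ⟨h.choose_spec, hx⟩

def rotUnit (J : ℕ) : ℂ := Complex.exp (2 * π / J * I)

section Polygon

variable {J : ℕ}

theorem vertex_eq_ofReal_mul_exp (k : ℤ) :
    vertex J k = ↑(1 / Real.cos (π / J)) * Complex.exp (↑(π / J + 2 * π * k / J - π / 2) * I) := by
  rw [vertex, Complex.real_smul]
  push_cast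
  rfl

theorem cos_pi_div_pos (hJ : 2 < J) : 0 < Real.cos (π / J) := by
  have hJ' : (2 : ℝ) < J := by exact_mod_cast hJ
  apply Real.cos_pos_of_mem_Ioo ⟨by linarith [show 0 < π / J by positivity, Real.pi_pos], ?_⟩
  rw [div_lt_div_iff₀ (by positivity) two_pos]
  nlinarith [Real.pi_pos]

theorem vertex_ne_zero (hJ : 2 < J) (k : ℤ) : vertex J k ≠ 0 := by
  rw [vertex_eq_ofReal_mul_exp]
  exact mul_ne_zero (Complex.ofReal_ne_zero.2 (one_div_ne_zero (cos_pi_div_pos hJ).ne'))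
    (Complex.exp_ne_zero _)

theorem vertex_eq_rotUnit_mul (k : ℤ) : vertex J k = rotUnit J * vertex J (k - 1) := by
  rw [vertex, vertex, rotUnit, mul_smul_comm, ← Complex.exp_add]
  congr 2
  push_cast
  ring

theorem vertex_add_natCast (hJ : J ≠ 0) (k : ℤ) : vertex J (k + J) = vertex J k := by
  rw [vertex, vertex]
  congr 1
  rw [← (Complex.exp_periodic.int_mul 1) ((π / J + 2 * π * k / J - π / 2) * I)]
  congr 1
  field_simp
  push_cast
  ring

theorem im_rotUnit_pos (hJ : 2 < J) : 0 < (rotUnit J).im := by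
  have hJ' : (2 : ℝ) < J := by exact_mod_cast hJ
  rw [rotUnit, show (2 * π / J : ℂ) = ↑(2 * π / J) by push_cast; rfl,
    Complex.exp_ofReal_mul_I_im]
  apply Real.sin_pos_of_pos_of_lt_pi (by positivity)
  rw [div_lt_iff₀ (by positivity)]
  nlinarith [Real.pi_pos]

theorem rotUnit_ne_one (hJ : 2 < J) : rotUnit J ≠ 1 := fun h => by
  simpa [h] using im_rotUnit_pos hJ

theorem reflIso_apply (θ : ℝ) (z : ℂ) :
    reflIso θ z = Complex.exp (↑(2 * θ) * I) * (starRingEnd ℂ) z := by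
  simp [reflIso, rotIso, Circle.coe_exp]

theorem reflIso_reflIso (θ : ℝ) (z : ℂ) : reflIso θ (reflIso θ z) = z := by
  rw [reflIso_apply, reflIso_apply, map_mul, ← Complex.exp_conj, ← mul_assoc, ← Complex.exp_add,
    map_mul, Complex.conj_ofReal, Complex.conj_I, mul_neg, add_neg_cancel, Complex.exp_zero,
    one_mul, Complex.conj_conj]

theorem reflIso_vertex (i k : ℤ) :
    reflIso (2 * π * i / J) (vertex J k) = -vertex J (2 * i - 1 - k) := by
  rw [reflIso_apply, vertex_eq_ofReal_mul_exp, vertex_eq_ofReal_mul_exp, map_mul,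
    Complex.conj_ofReal, ← Complex.exp_conj, mul_left_comm, ← Complex.exp_add, ← mul_neg,
    ← neg_one_mul (Complex.exp _), ← Complex.exp_pi_mul_I, ← Complex.exp_add]
  congr 2
  simp only [map_mul, Complex.conj_ofReal, Complex.conj_I]
  push_cast
  ring

theorem zero_notMem_edge (hJ : 2 < J) (i : ℤ) : (0 : ℂ) ∉ edge J i := by
  rintro ⟨a, b, -, -, hab, h⟩
  have hfac : vertex J (i - 1) * (a + b * rotUnit J) = 0 := by
    rw [← h, vertex_eq_rotUnit_mul i, Complex.real_smul, Complex.real_smul]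
    ring
  have hzero := (mul_eq_zero.1 hfac).resolve_left (vertex_ne_zero hJ _)
  have hb : b = 0 := by
    have him := congrArg Complex.im hzero
    simp only [Complex.add_im, Complex.ofReal_im, Complex.mul_im, Complex.ofReal_re,
      zero_mul, zero_add, add_zero, Complex.zero_im] at him
    exact (mul_eq_zero.1 him).resolve_right (im_rotUnit_pos hJ).ne'
  have ha : a = 0 := by simpa [hb] using hzero
  simp [ha, hb] at hab

theorem edge_periodic (hJ : J ≠ 0) : Function.Periodic (edge J) J := fun i => by
  rw [edge, edge, show i + J - 1 = i - 1 + J by ring, vertex_add_natCast hJ,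
    vertex_add_natCast hJ]

theorem isCompact_edge (i : ℤ) : IsCompact (edge J i) := by
  rw [edge, segment_eq_image_lineMap]
  exact isCompact_Icc.image AffineMap.lineMap_continuous

theorem polyQ_eq_image_smul (hJ : J ≠ 0) :
    polyQ J = (fun p : ℝ × ℂ => p.1 • p.2) '' (Icc 0 1 ×ˢ ⋃ i ∈ Ico (0 : ℤ) J, edge J i) := by
  ext z
  constructor
  · rintro ⟨t, ht, i, y, hy, rfl⟩
    obtain ⟨k, hk, hik⟩ := (edge_periodic hJ).exists_mem_Ico₀ (by omega) i
    exact ⟨(t, y), ⟨ht, mem_biUnion hk (hik ▸ hy)⟩, rfl⟩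
  · rintro ⟨⟨t, y⟩, ⟨ht, hy⟩, rfl⟩
    obtain ⟨k, -, hk⟩ := mem_iUnion₂.1 hy
    exact ⟨t, ht, k, y, hk, rfl⟩

theorem isCompact_polyQ (hJ : J ≠ 0) : IsCompact (polyQ J) := by
  rw [polyQ_eq_image_smul hJ]
  exact (isCompact_Icc.prod ((finite_Ico 0 (J : ℤ)).isCompact_biUnion
    fun i _ => isCompact_edge i)).image (by fun_prop)

theorem zero_mem_polyQ : (0 : ℂ) ∈ polyQ J :=
  ⟨0, left_mem_Icc.2 zero_le_one, 0, vertex J 0, right_mem_segment ℝ _ _, (zero_smul ℝ _).symm⟩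

theorem vertex_mem_polyQ (k : ℤ) : vertex J k ∈ polyQ J :=
  ⟨1, right_mem_Icc.2 zero_le_one, k, vertex J k, right_mem_segment ℝ _ _, (one_smul ℝ _).symm⟩

theorem polyQ_nontrivial (hJ : 2 < J) : (polyQ J).Nontrivial :=
  ⟨vertex J 0, vertex_mem_polyQ 0, 0, zero_mem_polyQ, vertex_ne_zero hJ 0⟩

/- `R_i` sends `p_{i-1}, p_i` to `-p_i, -p_{i-1}`, so `b_j` has edge vector `±(p_i - p_{i-1})`;
an edge is determined by its edge vector since `p_k - p_{k-1} = (rotUnit J - 1) p_{k-1}`. -/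
theorem eq_zero_or_fixes_edge_of_image_eq_edge (hJ : 2 < J) {i j : ℤ} {v : ℂ}
    (h : (fun z => reflIso (2 * π * i / J) z + v) '' edge J i = edge J j) :
    v = 0 ∨ ∀ z ∈ edge J i, reflIso (2 * π * i / J) z + v = z := by
  set R := reflIso (2 * π * i / J)
  let A : ℂ →ᵃ[ℝ] ℂ := (R : ℂ →ₗ[ℝ] ℂ).toAffineMap + AffineMap.const ℝ ℂ v
  have hA : ∀ z, A z = R z + v := fun z => rfl
  have hAi : A (vertex J i) = v - vertex J (i - 1) := by
    rw [hA, reflIso_vertex, show 2 * i - 1 - i = i - 1 by ring]; ring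
  have hAi' : A (vertex J (i - 1)) = v - vertex J i := by
    rw [hA, reflIso_vertex, show 2 * i - 1 - (i - 1) = i by ring]; ring
  have hends : segment ℝ (v - vertex J i) (v - vertex J (i - 1)) =
      segment ℝ (vertex J (j - 1)) (vertex J j) := by
    rw [← hAi, ← hAi', ← image_segment]
    exact h
  have hω := sub_ne_zero.2 (rotUnit_ne_one hJ)
  have hvi := vertex_eq_rotUnit_mul (J := J) i
  have hvj := vertex_eq_rotUnit_mul (J := J) j
  have hne : v - vertex J i ≠ v - vertex J (i - 1) := fun heq => by
    have : (rotUnit J - 1) * vertex J (i - 1) = 0 := by linear_combination -hvi - heq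
    exact (mul_ne_zero hω (vertex_ne_zero hJ _)) this
  rcases endpoints_eq_of_segment_eq hne hends with ⟨h1, h2⟩ | ⟨h1, h2⟩
  · right
    have hji : vertex J (j - 1) = vertex J (i - 1) :=
      mul_left_cancel₀ hω (by linear_combination -hvj + hvi - h1 + h2)
    intro z hz
    rw [edge, segment_eq_image_lineMap] at hz
    obtain ⟨t, -, rfl⟩ := hz
    rw [← hA, AffineMap.apply_lineMap, hAi, hAi',
      show v - vertex J i = vertex J (i - 1) by linear_combination hji - h1,
      show v - vertex J (i - 1) = vertex J i by linear_combination hji - h1]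
  · left
    have hji : vertex J (j - 1) = -vertex J (i - 1) :=
      mul_left_cancel₀ hω (by linear_combination -hvj - hvi - h1 + h2)
    linear_combination hji - h1

end Polygon

namespace SSSystem

variable {J : ℕ} {S : Type} [Fintype S] (σ : SSSystem J S)

def finv (s : S) (y : ℂ) : ℂ := (σ.φ s).symm (σ.r⁻¹ • (y - σ.c s))

theorem f_finv (s : S) (y : ℂ) : σ.f s (σ.finv s y) = y := by
  rw [f, finv, LinearIsometryEquiv.apply_symm_apply, smul_smul, mul_inv_cancel₀ σ.hr0.ne',
    one_smul, sub_add_cancel]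

theorem finv_f (s : S) (x : ℂ) : σ.finv s (σ.f s x) = x := by
  rw [f, finv, add_sub_cancel_right, smul_smul, inv_mul_cancel₀ σ.hr0.ne', one_smul,
    LinearIsometryEquiv.symm_apply_apply]

theorem f_injective (s : S) : Function.Injective (σ.f s) :=
  Function.LeftInverse.injective (σ.finv_f s)

theorem continuous_f (s : S) : Continuous (σ.f s) := by
  unfold f; fun_prop

theorem continuous_finv (s : S) : Continuous (σ.finv s) := by
  unfold finv; fun_prop

theorem finv_f_apply (s t : S) (z : ℂ) :
    σ.finv t (σ.f s z) = (σ.φ t).symm (σ.φ s z) + σ.finv t (σ.c s) := by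
  rw [f, finv, finv, add_sub_assoc, smul_add, smul_smul, inv_mul_cancel₀ σ.hr0.ne', one_smul,
    map_add]

theorem symm_φ_φ_apply_eq_reflIso (hG : σ.G = ⊥) {s t : S} {θ : ℝ}
    (h : (σ.φ t)⁻¹ * σ.φ s * reflIso θ ∈ σ.G) (z : ℂ) :
    (σ.φ t).symm (σ.φ s z) = reflIso θ z := by
  rw [hG, Subgroup.mem_bot] at h
  simpa [reflIso_reflIso] using congr(($h) (reflIso θ z))

theorem Qw_singleton (s : S) : σ.Qw [s] = σ.f s '' polyQ J := rfl

theorem isClosed_Qw_singleton (hJ : J ≠ 0) (s : S) : IsClosed (σ.Qw [s]) :=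
  ((isCompact_polyQ hJ).image (σ.continuous_f s)).isClosed

theorem Qw_singleton_nontrivial (hJ : 2 < J) (s : S) : (σ.Qw [s]).Nontrivial :=
  (polyQ_nontrivial hJ).image (σ.f_injective s)

theorem Qn_one (K : Set ℂ) (x : ℂ) :
    σ.Qn K 1 x = ⋃ u : {u : S // x ∈ σ.f u '' K}, σ.Qw [u] := by
  ext z
  simp only [Qn, mem_iUnion, mem_ofPred_eq, List.length_eq_one_iff, iUnion_subtype]
  constructor
  · rintro ⟨w, ⟨⟨u, rfl⟩, hx⟩, hz⟩
    exact ⟨u, hx, hz⟩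
  · rintro ⟨u, hx, hz⟩
    exact ⟨[u], ⟨⟨u, rfl⟩, hx⟩, hz⟩

theorem eqOn_finv_of_edge (hJ : 2 < J) (hG : σ.G = ⊥) {s t : S} {i j : ℤ}
    (hQ : σ.Qw [s] ∩ σ.Qw [t] = σ.f s '' edge J i)
    (hE : σ.f s '' edge J i = σ.f t '' edge J j)
    (hGm : (σ.φ t)⁻¹ * σ.φ s * reflIso (2 * π * i / J) ∈ σ.G) :
    EqOn (σ.finv s) (σ.finv t) (σ.Qw [s] ∩ σ.Qw [t]) := by
  have hcomp : ∀ z, σ.finv t (σ.f s z) = reflIso (2 * π * i / J) z + σ.finv t (σ.c s) :=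
    fun z => by rw [finv_f_apply, σ.symm_φ_φ_apply_eq_reflIso hG hGm]
  have himage : (fun z => reflIso (2 * π * i / J) z + σ.finv t (σ.c s)) '' edge J i =
      edge J j := by
    simp_rw [← hcomp]
    rw [← image_image (σ.finv t) (σ.f s), hE, image_image]
    simp [finv_f]
  rcases eq_zero_or_fixes_edge_of_image_eq_edge hJ himage with hv | hfix
  · exfalso
    have hc : σ.f t 0 = σ.f s 0 := by
      simpa [hcomp, hv] using σ.f_finv t (σ.f s 0)
    have h0 : σ.f s 0 ∈ σ.Qw [s] ∩ σ.Qw [t] :=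
      ⟨⟨0, zero_mem_polyQ, rfl⟩, ⟨0, zero_mem_polyQ, hc⟩⟩
    rw [hQ] at h0
    obtain ⟨x, hx, hfx⟩ := h0
    exact zero_notMem_edge hJ i (σ.f_injective s hfx ▸ hx)
  · intro y hy
    rw [hQ] at hy
    obtain ⟨x, hx, rfl⟩ := hy
    rw [finv_f, hcomp, hfix x hx]

theorem eqOn_finv_of_inter_nontrivial (hJ : 2 < J) (hax : σ.Axioms) (hG : σ.G = ⊥) {s t : S}
    (h : (σ.Qw [s] ∩ σ.Qw [t]).Nontrivial) :
    EqOn (σ.finv s) (σ.finv t) (σ.Qw [s] ∩ σ.Qw [t]) := by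
  rcases eq_or_ne s t with rfl | hst
  · exact fun _ _ => rfl
  rcases hax.a4 s t hst h.nonempty with ⟨i, j, hQ, hE, hGm⟩ | ⟨i, j, hQ, -⟩
  · exact σ.eqOn_finv_of_edge hJ hG hQ hE hGm
  · exact absurd (hQ ▸ h) not_nontrivial_singleton

theorem finv_eq_finv_of_mem_cells (hJ : 2 < J) (hax : σ.Axioms) (hG : σ.G = ⊥) {K : Set ℂ}
    (hKQ : K ⊆ polyQ J) (hnoiso : σ.NoIsolatedContactPoint K) {y : ℂ} (hy : y ∈ K) {s t : S}
    (hs : y ∈ σ.f s '' K) (ht : y ∈ σ.f t '' K) : σ.finv s y = σ.finv t y := by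
  have hyQ : ∀ u : {u : S // y ∈ σ.f u '' K}, y ∈ σ.Qw [u] := fun u => image_mono hKQ u.2
  have hQn : ∀ u : {u : S // y ∈ σ.f u '' K}, σ.Qw [u] ⊆ σ.Qn K 1 y := fun u => by
    rw [Qn_one]; exact subset_iUnion_of_subset u subset_rfl
  have hmeets : ∀ u : {u : S // y ∈ σ.f u '' K}, (σ.Qn K 1 y \ {y} ∩ σ.Qw [u]).Nonempty :=
    fun u => by
      obtain ⟨z, hz, hzy⟩ := (σ.Qw_singleton_nontrivial hJ u).exists_ne y
      exact ⟨z, ⟨hQn u hz, hzy⟩, hz⟩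
  refine (hnoiso y hy 1).isPreconnected.eq_of_isClosed_cover
    (F := fun u : {u : S // y ∈ σ.f u '' K} => σ.Qw [u])
    (fun u => σ.isClosed_Qw_singleton (by omega) u) (by rw [Qn_one]; exact sdiff_subset)
    (g := fun u => σ.finv u y) ?_ (hmeets ⟨s, hs⟩) (hmeets ⟨t, ht⟩)
  rintro u v ⟨z, ⟨⟨-, hzy⟩, hzu⟩, hzv⟩
  exact σ.eqOn_finv_of_inter_nontrivial hJ hax hG ⟨z, ⟨hzu, hzv⟩, y, ⟨hyQ u, hyQ v⟩, hzy⟩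
    ⟨hyQ u, hyQ v⟩

end SSSystem

/-- Proposition 10.2-(1): for a `(J,{I})`-self-similar system with no
isolated contact point of cells, there is a continuous folding map `ψ : K → K` with
`ψ|_{K_s} = (f_s|_K)⁻¹` for every `s ∈ S`. -/
theorem statement14 (J : ℕ) (hJ : 3 ≤ J) (S : Type) [Fintype S]
    (σ : SSSystem J S) (hax : σ.Axioms) (hGtriv : σ.G = ⊥)
    (K : Set ℂ) (hK : σ.IsAttractor K) (hnoiso : σ.NoIsolatedContactPoint K) :
    ∃ ψ : ℂ → ℂ, ContinuousOn ψ K ∧ MapsTo ψ K K ∧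
      ∀ s : S, ∀ y ∈ σ.f s '' K, σ.f s (ψ y) = y := by
  obtain ⟨-, hKc, hKQ, hKeq⟩ := hK
  have hcell : ∀ {s y}, y ∈ σ.f s '' K → y ∈ K := fun {s _} hy => by
    rw [hKeq]; exact mem_iUnion_of_mem s hy
  obtain ⟨ψ, hψ⟩ := exists_eqOn_of_eqOn_inter (C := fun s => σ.f s '' K) (g := σ.finv)
    fun s t y hy => σ.finv_eq_finv_of_mem_cells hJ hax hGtriv hKQ hnoiso (hcell hy.1) hy.1 hy.2
  refine ⟨ψ, ?_, fun y hy => ?_, fun s y hy => by rw [hψ s hy, σ.f_finv]⟩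
  · rw [hKeq]
    exact (locallyFinite_of_finite _).continuousOn_iUnion
      (fun s => (hKc.image (σ.continuous_f s)).isClosed)
      fun s => (σ.continuous_finv s).continuousOn.congr (hψ s)
  · rw [hKeq] at hy
    obtain ⟨s, x, hx, rfl⟩ := mem_iUnion.1 hy
    rw [hψ s ⟨x, hx, rfl⟩, σ.finv_f]
    exact hx
end
end
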